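/- Let N ≥ 1, A ∈ ℝ^{2N×2N}, B ∈ ℝ^{2N×N}, and let P, Q be symmetric real 2N×2N matrices with AᵀP + PA = −Q. Assume there are constants 0 < λ_P ≤ Λ_P and λ_Q > 0 such that λ_P ‖x‖² ≤ ⟨x, P x⟩ ≤ Λ_P ‖x‖² and ⟨x, Q x⟩ ≥ λ_Q ‖x‖² for all x ∈ ℝ^{2N}. Let ε > 0, ρ̄ > 0, and let η, ρ : ℝ → ℝ^N × ℝ be functions with ‖η(t)‖ ≤ ρ(t) ≤ ρ̄ for all t. Let e : ℝ → ℝ^{2N} be differentiable and satisfy ė(t) = A e(t) + B(r(t) + η(t)), where w(t) = Bᵀ P e(t) and r(t) = −ρ(t) w(t)/‖w(t)‖ if ‖w(t)‖ > ε and r(t) = −ρ(t) w(t)/ε if ‖w(t)‖ ≤ ε. Then, with k = λ_Q / Λ_P, for all t ≥ 0 the Lyapunov function V(t) = ⟨e(t), P e(t)⟩ satisfies V(t) ≤ e^{−k t} V(0) + (ε ρ̄ Λ_P / (2 λ_Q)) (1 − e^{−k t}); consequently ‖e(t)‖² ≤ (1/λ_P)(e^{−k t} Λ_P ‖e(0)‖²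 + ε ρ̄ Λ_P / (2 λ_Q)) for all t ≥ 0, so the tracking error is uniformly ultimately bounded with an ultimate bound √(ε ρ̄ Λ_P / (2 λ_Q λ_P)) that can be made arbitrarily small by choosing the design parameter ε sufficiently small. -/

import Mathlib

/-!
Along trajectories, `V = ⟨e, P e⟩` has derivative `-⟨e, Q e⟩ + 2 ⟨r + η, w⟩` by the Lyapunov
equation. The robust control makes `⟨r + η, w⟩ ≤ ε ρ̄ / 4` (the only slack is inside the boundary
layer `‖w‖ ≤ ε`), and `⟨e, Q e⟩ ≥ λ_Q ‖e‖² ≥ k V`, so `V' ≤ -k V + k M` with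
`M = ε ρ̄ Λ_P / (2 λ_Q)`. The comparison principle for this linear differential inequality gives
the bound on `V`, and `λ_P ‖e‖² ≤ V` turns it into the bound on `‖e‖²`.
-/

open Matrix
open scoped RealInnerProductSpace

/-- Matrix-vector multiplication viewed as a map between Euclidean spaces. -/
noncomputable def mv {m n : ℕ} (A : Matrix (Fin m) (Fin n) ℝ)
    (x : EuclideanSpace ℝ (Fin n)) : EuclideanSpace ℝ (Fin m) :=
  (EuclideanSpace.equiv (Fin m) ℝ).symm (A.mulVec ((EuclideanSpace.equiv (Fin n) ℝ) x))

section MatrixVector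

variable {m n p : ℕ}

lemma mv_eq_toEuclideanLin (M : Matrix (Fin m) (Fin n) ℝ) : mv M = toEuclideanLin M := rfl

lemma mv_add (M : Matrix (Fin m) (Fin n) ℝ) (x y : EuclideanSpace ℝ (Fin n)) :
    mv M (x + y) = mv M x + mv M y :=
  map_add (toEuclideanLin M) x y

lemma add_mv (M M' : Matrix (Fin m) (Fin n) ℝ) (x : EuclideanSpace ℝ (Fin n)) :
    mv (M + M') x = mv M x + mv M' x := by
  simp [mv, add_mulVec]

lemma neg_mv (M : Matrix (Fin m) (Fin n) ℝ) (x : EuclideanSpace ℝ (Fin n)) :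
    mv (-M) x = -mv M x := by
  simp [mv, neg_mulVec]

lemma mv_mv (M : Matrix (Fin m) (Fin n) ℝ) (M' : Matrix (Fin n) (Fin p) ℝ)
    (x : EuclideanSpace ℝ (Fin p)) : mv M (mv M' x) = mv (M * M') x :=
  congrArg (WithLp.toLp 2) (mulVec_mulVec _ M M')

lemma inner_mv_right (M : Matrix (Fin m) (Fin n) ℝ) (x : EuclideanSpace ℝ (Fin m))
    (y : EuclideanSpace ℝ (Fin n)) : ⟪x, mv M y⟫ = ⟪mv Mᵀ x, y⟫ := by
  rw [mv_eq_toEuclideanLin, mv_eq_toEuclideanLin, ← conjTranspose_eq_transpose_of_trivial,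
    toEuclideanLin_conjTranspose_eq_adjoint, LinearMap.adjoint_inner_left]

lemma HasDerivAt.mv {f : ℝ → EuclideanSpace ℝ (Fin n)} {f' : EuclideanSpace ℝ (Fin n)} {t : ℝ}
    (M : Matrix (Fin m) (Fin n) ℝ) (hf : HasDerivAt f f' t) :
    HasDerivAt (fun s => mv M (f s)) (mv M f') t :=
  (LinearMap.toContinuousLinearMap (toEuclideanLin M)).hasFDerivAt.comp_hasDerivAt t hf

end MatrixVector

section Lyapunov

variable {m n : ℕ} {P : Matrix (Fin m) (Fin m) ℝ}

lemma hasDerivAt_inner_mv_self (hP : P.IsSymm) {e : ℝ → EuclideanSpace ℝ (Fin m)}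
    {e' : EuclideanSpace ℝ (Fin m)} {t : ℝ} (he : HasDerivAt e e' t) :
    HasDerivAt (fun s => ⟪e s, mv P (e s)⟫) (2 * ⟪e t, mv P e'⟫) t := by
  have hsymm : ⟪e', mv P (e t)⟫ = ⟪e t, mv P e'⟫ := by
    rw [inner_mv_right, hP.eq, real_inner_comm]
  exact (he.inner ℝ (he.mv P)).congr_deriv (by rw [hsymm]; ring)

lemma two_mul_inner_mv_add_mv_of_lyapunov (hP : P.IsSymm) {A Q : Matrix (Fin m) (Fin m) ℝ}
    (hLyap : Aᵀ * P + P * A = -Q) (B : Matrix (Fin m) (Fin n) ℝ)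
    (x : EuclideanSpace ℝ (Fin m)) (u : EuclideanSpace ℝ (Fin n)) :
    2 * ⟪x, mv P (mv A x + mv B u)⟫ = -⟪x, mv Q x⟫ + 2 * ⟪u, mv Bᵀ (mv P x)⟫ := by
  have hdrift : 2 * ⟪x, mv P (mv A x)⟫ = -⟪x, mv Q x⟫ := by
    have hswap : ⟪x, mv (Aᵀ * P) x⟫ = ⟪x, mv (P * A) x⟫ := by
      rw [← mv_mv, ← mv_mv, inner_mv_right Aᵀ, transpose_transpose, inner_mv_right P x, hP.eq,
        real_inner_comm]
    rw [← inner_neg_right, ← neg_mv, ← hLyap, add_mv, inner_add_right, hswap, mv_mv]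
    ring
  have hinput : ⟪x, mv P (mv B u)⟫ = ⟪u, mv Bᵀ (mv P x)⟫ := by
    rw [inner_mv_right, hP.eq, inner_mv_right, real_inner_comm]
  rw [mv_add, inner_add_right, mul_add, hdrift, hinput]

end Lyapunov

section RobustControl

variable {E : Type*} [NormedAddCommGroup E] [InnerProductSpace ℝ E]

/-- The robustness vector `r = -ρ w / max ‖w‖ ε` of the outer-loop controller. -/
noncomputable def robustControl (ε ρ : ℝ) (w : E) : E :=
  if ε < ‖w‖ then (-(ρ / ‖w‖)) • w else (-(ρ / ε)) • w

lemma inner_robustControl_add_le {ε ρ : ℝ} (hε : 0 < ε) {w η : E} (hη : ‖η‖ ≤ ρ) :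
    ⟪robustControl ε ρ w + η, w⟫ ≤ ε * ρ / 4 := by
  have hρ : 0 ≤ ρ := (norm_nonneg η).trans hη
  have hηw : ⟪η, w⟫ ≤ ρ * ‖w‖ :=
    (real_inner_le_norm η w).trans (mul_le_mul_of_nonneg_right hη (norm_nonneg w))
  rw [inner_add_left, robustControl]
  split_ifs with hw
  · have hw0 : ‖w‖ ≠ 0 := (hε.trans hw).ne'
    rw [real_inner_smul_left, real_inner_self_eq_norm_sq]
    have : ρ / ‖w‖ * ‖w‖ ^ 2 = ρ * ‖w‖ := by field_simp
    nlinarith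
  · rw [real_inner_smul_left, real_inner_self_eq_norm_sq]
    -- inside the boundary layer `ρ (‖w‖ - ‖w‖² / ε)` is maximal at `‖w‖ = ε / 2`
    have hlayer : ρ * ‖w‖ - ρ / ε * ‖w‖ ^ 2 ≤ ε * ρ / 4 := by
      have : ε * ρ / 4 - (ρ * ‖w‖ - ρ / ε * ‖w‖ ^ 2) = ρ / ε * (‖w‖ - ε / 2) ^ 2 := by
        field_simp
        ring
      nlinarith [this, div_nonneg hρ hε.le, sq_nonneg (‖w‖ - ε / 2)]
    linarith

end RobustControl

lemma le_exp_mul_add_of_hasDerivAt_le {V V' : ℝ → ℝ} {k M : ℝ}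
    (hV : ∀ t, HasDerivAt V (V' t) t) (hV' : ∀ t, V' t ≤ -k * V t + k * M)
    {t : ℝ} (ht : 0 ≤ t) :
    V t ≤ Real.exp (-k * t) * V 0 + M * (1 - Real.exp (-k * t)) := by
  -- integrating factor: `exp (k s) * (V s - M)` is nonincreasing
  have hg : ∀ s, HasDerivAt (fun s => Real.exp (k * s) * (V s - M))
      (k * Real.exp (k * s) * (V s - M) + Real.exp (k * s) * V' s) s := fun s =>
    ((((hasDerivAt_id s).const_mul k).exp).congr_deriv (by simp [mul_comm])).mul
      ((hV s).sub_const M)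
  have hanti := antitone_of_hasDerivAt_nonpos hg fun s => calc
    _ = Real.exp (k * s) * (V' s - (-k * V s + k * M)) := by ring
    _ ≤ 0 := mul_nonpos_of_nonneg_of_nonpos (Real.exp_pos _).le (by linarith [hV' s])
  have hdecay : Real.exp (k * t) * (V t - M) ≤ V 0 - M := by
    simpa using hanti ht
  have hexp : Real.exp (-k * t) * Real.exp (k * t) = 1 := by
    rw [← Real.exp_add]; simp
  have := mul_le_mul_of_nonneg_left hdecay (Real.exp_pos (-k * t)).le
  rw [← mul_assoc, hexp, one_mul] at this
  linarith

theorem tracking_error_uniformly_ultimately_bounded_general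
    (N : ℕ)
    (A : Matrix (Fin (2 * N)) (Fin (2 * N)) ℝ)
    (B : Matrix (Fin (2 * N)) (Fin N) ℝ)
    (P Q : Matrix (Fin (2 * N)) (Fin (2 * N)) ℝ)
    (hP : P.IsSymm)
    (hLyap : Aᵀ * P + P * A = -Q)
    (lamP LamP lamQ : ℝ) (hlamP : 0 < lamP) (hlamPLamP : lamP ≤ LamP)
    (hlamQ : 0 < lamQ)
    (hPlb : ∀ x : EuclideanSpace ℝ (Fin (2 * N)), lamP * ‖x‖ ^ 2 ≤ ⟪x, mv P x⟫)
    (hPub : ∀ x : EuclideanSpace ℝ (Fin (2 * N)), ⟪x, mv P x⟫ ≤ LamP * ‖x‖ ^ 2)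
    (hQlb : ∀ x : EuclideanSpace ℝ (Fin (2 * N)), lamQ * ‖x‖ ^ 2 ≤ ⟪x, mv Q x⟫)
    (ε ρbar : ℝ) (hε : 0 < ε)
    (η : ℝ → EuclideanSpace ℝ (Fin N)) (ρ : ℝ → ℝ)
    (hηρ : ∀ t, ‖η t‖ ≤ ρ t) (hρ : ∀ t, ρ t ≤ ρbar)
    (e : ℝ → EuclideanSpace ℝ (Fin (2 * N)))
    (w : ℝ → EuclideanSpace ℝ (Fin N))
    (hw : ∀ t, w t = mv Bᵀ (mv P (e t)))
    (r : ℝ → EuclideanSpace ℝ (Fin N))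
    (hr : ∀ t, r t =
      if ε < ‖w t‖ then (-(ρ t / ‖w t‖)) • w t else (-(ρ t / ε)) • w t)
    (he : ∀ t, HasDerivAt e (mv A (e t) + mv B (r t + η t)) t) :
    ∀ t, 0 ≤ t →
      (⟪e t, mv P (e t)⟫ ≤
          Real.exp (-(lamQ / LamP) * t) * ⟪e 0, mv P (e 0)⟫ +
            ε * ρbar * LamP / (2 * lamQ) * (1 - Real.exp (-(lamQ / LamP) * t))) ∧
      ‖e t‖ ^ 2 ≤ (1 / lamP) *
          (Real.exp (-(lamQ / LamP) * t) * LamP * ‖e 0‖ ^ 2 +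
            ε * ρbar * LamP / (2 * lamQ)) := by
  intro t ht
  have hLamP : 0 < LamP := hlamP.trans_le hlamPLamP
  have hρbar : 0 ≤ ρbar := (norm_nonneg _).trans ((hηρ 0).trans (hρ 0))
  set k := lamQ / LamP with hk
  set M := ε * ρbar * LamP / (2 * lamQ) with hM
  have hdiss (s : ℝ) : 2 * ⟪e s, mv P (mv A (e s) + mv B (r s + η s))⟫ ≤
      -k * ⟪e s, mv P (e s)⟫ + k * M := by
    have hcontrol : ⟪r s + η s, w s⟫ ≤ ε * ρbar / 4 := by
      rw [hr s]
      exact (inner_robustControl_add_le hε (hηρ s)).trans (by gcongr; exact hρ s)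
    have hkV : k * ⟪e s, mv P (e s)⟫ ≤ lamQ * ‖e s‖ ^ 2 := by
      have := mul_le_mul_of_nonneg_left (hPub (e s)) (div_pos hlamQ hLamP).le
      rwa [← mul_assoc, div_mul_cancel₀ _ hLamP.ne'] at this
    have hkM : k * M = ε * ρbar / 2 := by
      rw [hk, hM]
      field_simp
    rw [two_mul_inner_mv_add_mv_of_lyapunov hP hLyap, ← hw]
    linarith [hQlb (e s)]
  have hV := le_exp_mul_add_of_hasDerivAt_le (fun s => hasDerivAt_inner_mv_self hP (he s)) hdiss ht
  refine ⟨hV, ?_⟩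
  have hexp := (Real.exp_pos (-k * t)).le
  have hV0 := mul_le_mul_of_nonneg_left (hPub (e 0)) hexp
  have hM0 : 0 ≤ M := by positivity
  rw [one_div, inv_mul_eq_div, le_div_iff₀ hlamP]
  nlinarith [hPlb (e t), mul_nonneg hM0 hexp]

/-- deterministic core of Theorem 1: Under the robust
outer-loop control law, with `AᵀP + PA = −Q`,
`λ_P ‖x‖² ≤ ⟨x, Px⟩ ≤ Λ_P ‖x‖²`, `⟨x, Qx⟩ ≥ λ_Q ‖x‖²`,
`‖η(t)‖ ≤ ρ(t) ≤ ρ̄`, `w(t) = BᵀP e(t)`, and `r(t) = −ρ(t) w(t)/‖w(t)‖` if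
`‖w(t)‖ > ε`, `r(t) = −ρ(t) w(t)/ε` otherwise, the Lyapunov function
`V(t) = ⟨e(t), P e(t)⟩` along `ė = A e + B (r + η)` satisfies, with
`k = λ_Q / Λ_P`, `V(t) ≤ e^{−kt} V(0) + (ε ρ̄ Λ_P/(2 λ_Q))(1 − e^{−kt})` and
`‖e(t)‖² ≤ (1/λ_P)(e^{−kt} Λ_P ‖e(0)‖² + ε ρ̄ Λ_P/(2 λ_Q))` for all `t ≥ 0`:
the tracking error is uniformly ultimately bounded with ultimate bound
`√(ε ρ̄ Λ_P / (2 λ_Q λ_P))`, arbitrarily small for small `ε`. -/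
theorem tracking_error_uniformly_ultimately_bounded
    (N : ℕ) (hN : 1 ≤ N)
    (A : Matrix (Fin (2 * N)) (Fin (2 * N)) ℝ)
    (B : Matrix (Fin (2 * N)) (Fin N) ℝ)
    (P Q : Matrix (Fin (2 * N)) (Fin (2 * N)) ℝ)
    (hP : P.IsSymm) (hQ : Q.IsSymm)
    (hLyap : Aᵀ * P + P * A = -Q)
    (lamP LamP lamQ : ℝ) (hlamP : 0 < lamP) (hlamPLamP : lamP ≤ LamP)
    (hlamQ : 0 < lamQ)
    (hPlb : ∀ x : EuclideanSpace ℝ (Fin (2 * N)), lamP * ‖x‖ ^ 2 ≤ ⟪x, mv P x⟫)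
    (hPub : ∀ x : EuclideanSpace ℝ (Fin (2 * N)), ⟪x, mv P x⟫ ≤ LamP * ‖x‖ ^ 2)
    (hQlb : ∀ x : EuclideanSpace ℝ (Fin (2 * N)), lamQ * ‖x‖ ^ 2 ≤ ⟪x, mv Q x⟫)
    (ε ρbar : ℝ) (hε : 0 < ε) (hρbar : 0 < ρbar)
    (η : ℝ → EuclideanSpace ℝ (Fin N)) (ρ : ℝ → ℝ)
    (hηρ : ∀ t, ‖η t‖ ≤ ρ t) (hρ : ∀ t, ρ t ≤ ρbar)
    (e : ℝ → EuclideanSpace ℝ (Fin (2 * N)))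
    (w : ℝ → EuclideanSpace ℝ (Fin N))
    (hw : ∀ t, w t = mv Bᵀ (mv P (e t)))
    (r : ℝ → EuclideanSpace ℝ (Fin N))
    (hr : ∀ t, r t =
      if ε < ‖w t‖ then (-(ρ t / ‖w t‖)) • w t else (-(ρ t / ε)) • w t)
    (he : ∀ t, HasDerivAt e (mv A (e t) + mv B (r t + η t)) t) :
    ∀ t, 0 ≤ t →
      (⟪e t, mv P (e t)⟫ ≤
          Real.exp (-(lamQ / LamP) * t) * ⟪e 0, mv P (e 0)⟫ +
            ε * ρbar * LamP / (2 * lamQ) * (1 - Real.exp (-(lamQ / LamP) * t))) ∧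
      ‖e t‖ ^ 2 ≤ (1 / lamP) *
          (Real.exp (-(lamQ / LamP) * t) * LamP * ‖e 0‖ ^ 2 +
            ε * ρbar * LamP / (2 * lamQ)) :=
  tracking_error_uniformly_ultimately_bounded_general N A B P Q hP hLyap lamP LamP lamQ hlamP
    hlamPLamP hlamQ hPlb hPub hQlb ε ρbar hε η ρ hηρ hρ e w hw r hr he
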